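/- arXiv:1609.04176 — 3 statements merged into one kernel-verified Lean document; each statement's English description precedes it below -/
import Mathlib

section
/- Let P⋆ be the RB-template with k = 2, states {p,q}, initial states {p}, one rendezvous action a, rendezvous edges e₁ = (p,a_1,p) and e₂ = (p,a_2,q), and broadcast edges b_p = (p,𝔟,p) and b_q = (q,𝔟,p). Then exec_inf(P⋆) is exactly the set of infinite edge sequences of the form e₁^{n_1} e₂^{m_1} β_1 e₁^{n_2} e₂^{m_2} β_2 …, where for every i ∈ ℕ: n_i ∈ ℕ_0, m_i ∈ {0,1}, β_i = b_q if m_i = 1 and β_i = b_p if m_i = 0, and limsup_{i→∞} n_i < ∞. -/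
/-! ### Core definitions: RB-templates and RB-systems -/

/-- Edge labels: a rendezvous letter `a_j` (an action together with an index in `[k]`),
or the broadcast letter `𝔟` (represented by `Sum.inr ()`). -/
abbrev Lab (k : ℕ) (A : Type) := (A × Fin k) ⊕ Unit

/-- Edges of a labeled transition system over states `S`. -/
abbrev EdgeT (k : ℕ) (A S : Type) := S × Lab k A × S

/-- An RB-template: a set of initial states and a set of labeled edges. -/
structure RBTemplate (k : ℕ) (A : Type) (S : Type) where
  I : Set S
  R : Set (EdgeT k A S)

/-- Broadcast totality: every state has an outgoing broadcast edge. -/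
def RBTemplate.BTotal {k : ℕ} {A S : Type} (P : RBTemplate k A S) : Prop :=
  ∀ s : S, ∃ t : S, (s, Sum.inr (), t) ∈ P.R

/-- Each rendezvous letter labels at most one edge. -/
def RBTemplate.UniqLab {k : ℕ} {A S : Type} (P : RBTemplate k A S) : Prop :=
  ∀ (ς : A × Fin k) (s t s' t' : S),
    (s, Sum.inl ς, t) ∈ P.R → (s', Sum.inl ς, t') ∈ P.R → s = s' ∧ t = t'

/-- Synchronization label of a global transition of a system whose processes are
indexed by `ι`: either a broadcast, or a `k`-wise rendezvous on action `a` by the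
processes `procs 0, …, procs (k-1)`. -/
inductive Sync (k : ℕ) (A : Type) (ι : Type) where
  | bcast : Sync k A ι
  | rdz (a : A) (procs : Fin k → ι) : Sync k A ι

/-- `(f, σ, g)` is a global transition of the system with processes indexed by `ι`. -/
def RBTrans {k : ℕ} {A S : Type} (P : RBTemplate k A S) {ι : Type}
    (f : ι → S) (σ : Sync k A ι) (g : ι → S) : Prop :=
  match σ with
  | .bcast => ∀ i, (f i, Sum.inr (), g i) ∈ P.R
  | .rdz a procs =>
      Function.Injective procs ∧
      (∀ j : Fin k, (f (procs j), Sum.inl (a, j), g (procs j)) ∈ P.R) ∧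
      (∀ i, (∀ j, procs j ≠ i) → g i = f i)

/-- Process `i` moves in a transition with synchronization label `σ`. -/
def Sync.Moved {k : ℕ} {A ι : Type} (σ : Sync k A ι) (i : ι) : Prop :=
  match σ with
  | .bcast => True
  | .rdz _ procs => ∃ j, procs j = i

/-- The edge of the template taken by process `i` in the global transition `(f, σ, g)`
(`none` if `i` does not move). -/
noncomputable def edgeAt {k : ℕ} {A S ι : Type} (f g : ι → S) (σ : Sync k A ι) (i : ι) :
    Option (EdgeT k A S) :=
  match σ with
  | .bcast => some (f i, Sum.inr (), g i)
  | .rdz a procs =>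
      letI := Classical.propDecidable (∃ j, procs j = i)
      if h : ∃ j, procs j = i then some (f i, Sum.inl (a, Classical.choose h), g i)
      else none

/-- A finite path of the RB-system with processes indexed by `ι`:
a length, configurations `conf 0, …, conf len`, and transitions between them. -/
structure FinPath {k : ℕ} {A S : Type} (P : RBTemplate k A S) (ι : Type) where
  len : ℕ
  conf : ℕ → ι → S
  sync : ℕ → Sync k A ι
  valid : ∀ t, t < len → RBTrans P (conf t) (sync t) (conf (t + 1))

/-- An infinite path of the RB-system with processes indexed by `ι`. -/
structure InfPath {k : ℕ} {A S : Type} (P : RBTemplate k A S) (ι : Type) where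
  conf : ℕ → ι → S
  sync : ℕ → Sync k A ι
  valid : ∀ t, RBTrans P (conf t) (sync t) (conf (t + 1))

/-- A finite run: a finite path starting at an initial configuration. -/
def FinPath.IsRun {k : ℕ} {A S : Type} {P : RBTemplate k A S} {ι : Type}
    (p : FinPath P ι) : Prop :=
  ∀ i, p.conf 0 i ∈ P.I

/-- An infinite run: an infinite path starting at an initial configuration. -/
def InfPath.IsRun {k : ℕ} {A S : Type} {P : RBTemplate k A S} {ι : Type}
    (p : InfPath P ι) : Prop :=
  ∀ i, p.conf 0 i ∈ P.I

/-- The projection of a finite path onto process `i`: the sequence of edges taken by `i`. -/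
noncomputable def FinPath.proj {k : ℕ} {A S : Type} {P : RBTemplate k A S} {ι : Type}
    (p : FinPath P ι) (i : ι) : List (EdgeT k A S) :=
  (List.range p.len).filterMap (fun t => edgeAt (p.conf t) (p.conf (t + 1)) (p.sync t) i)

/-- The number of broadcast transitions on a finite path. -/
noncomputable def FinPath.bcasts {k : ℕ} {A S : Type} {P : RBTemplate k A S} {ι : Type}
    (p : FinPath P ι) : ℕ :=
  Nat.card {t : ℕ // t < p.len ∧ p.sync t = Sync.bcast}

/-- The set of finite executions of the RB-system induced by `P`: projections onto
process `0` of the finite runs of the systems `P^n`, `n ∈ ℕ`. -/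
def execFin {k : ℕ} {A S : Type} (P : RBTemplate k A S) : Set (List (EdgeT k A S)) :=
  {w | ∃ n : ℕ, ∃ p : FinPath P (Fin (n + 1)), p.IsRun ∧ p.proj 0 = w}

/-- The set of infinite executions of the RB-system induced by `P`: infinite projections
onto process `0` of the runs of the systems `P^n`, `n ∈ ℕ`.  Here `ι` enumerates, in
increasing order, exactly the transitions in which process `0` moves. -/
def execInf {k : ℕ} {A S : Type} (P : RBTemplate k A S) : Set (ℕ → EdgeT k A S) :=
  {w | ∃ n : ℕ, ∃ p : InfPath P (Fin (n + 1)), p.IsRun ∧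
    ∃ ι : ℕ → ℕ, StrictMono ι ∧
      (∀ t, (p.sync t).Moved 0 ↔ ∃ m, ι m = t) ∧
      (∀ m, edgeAt (p.conf (ι m)) (p.conf (ι m + 1)) (p.sync (ι m)) 0 = some (w m))}

/-! ### The witness template `P⋆` (Figure 2):
states `p = false`, `q = true`; one rendezvous action; `k = 2`;
rendezvous edges `(p, a₁, p)`, `(p, a₂, q)`; broadcast edges `(p, 𝔟, p)`, `(q, 𝔟, p)`. -/

def Pstar : RBTemplate 2 Unit Bool where
  I := {false}
  R := {(false, Sum.inl ((), (0 : Fin 2)), false),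
        (false, Sum.inl ((), (1 : Fin 2)), true),
        (false, Sum.inr (), false),
        (true, Sum.inr (), false)}

/-- The rendezvous edge `(p, a₁, p)` of `P⋆`. -/
def e₁ : EdgeT 2 Unit Bool := (false, Sum.inl ((), (0 : Fin 2)), false)

/-- The rendezvous edge `(p, a₂, q)` of `P⋆`. -/
def e₂ : EdgeT 2 Unit Bool := (false, Sum.inl ((), (1 : Fin 2)), true)

/-- The broadcast edge `(p, 𝔟, p)` of `P⋆`. -/
def bP : EdgeT 2 Unit Bool := (false, Sum.inr (), false)

/-- The broadcast edge `(q, 𝔟, p)` of `P⋆`. -/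
def bQ : EdgeT 2 Unit Bool := (true, Sum.inr (), false)


/-!
A word over the edges of `P⋆` has the block shape iff it is a path of `P⋆` starting in `p` along
which the number `e₁Count` of `e₁`-moves since the last broadcast stays bounded.

In a run with `n + 1` processes, every `e₁` of process `0` needs an `a₂`-partner that moves to `q`.
That partner cannot move again before the next broadcast, since all rendezvous edges leave `p`, and
a broadcast also moves process `0`. Hence the partners of the `e₁`s since the last broadcast are
pairwise distinct processes other than `0`, and `e₁Count ≤ n`.

Conversely, if `e₁Count ≤ M`, a system with `M + 2` processes realizes the word: process `0`
follows it, its `j`-th `e₁` since the last broadcast is taken together with process `j`, and its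
`e₂`s are taken together with process `M + 1`, which therefore never leaves `p`.
-/

open Function Filter

namespace RBTemplate

variable {k : ℕ} {A S : Type}

def IsInitPath (P : RBTemplate k A S) (w : ℕ → EdgeT k A S) : Prop :=
  (w 0).1 ∈ P.I ∧ ∀ m, w m ∈ P.R ∧ (w m).2.2 = (w (m + 1)).1

end RBTemplate

section edgeAt

variable {k : ℕ} {A S ι : Type} {f g : ι → S} {a : A} {procs : Fin k → ι} {i : ι}

lemma edgeAt_rdz_of_apply_eq {j : Fin k} (hinj : Injective procs) (hj : procs j = i) :
    edgeAt f g (.rdz a procs) i = some (f i, .inl (a, j), g i) := by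
  have h : ∃ j, procs j = i := ⟨j, hj⟩
  simp only [edgeAt, dif_pos h, hinj ((Classical.choose_spec h).trans hj.symm)]

lemma exists_apply_eq_of_edgeAt_rdz_eq_some {e : EdgeT k A S}
    (h : edgeAt f g (.rdz a procs) i = some e) :
    ∃ j, procs j = i ∧ e = (f i, .inl (a, j), g i) := by
  by_cases hi : ∃ j, procs j = i
  · simp only [edgeAt, dif_pos hi, Option.some.injEq] at h
    exact ⟨_, Classical.choose_spec hi, h.symm⟩
  · simp [edgeAt, dif_neg hi] at h

lemma RBTrans.apply_eq_of_not_moved {P : RBTemplate k A S} {σ : Sync k A ι}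
    (hT : RBTrans P f σ g) (hi : ¬ σ.Moved i) : g i = f i := by
  cases σ with
  | bcast => exact absurd trivial hi
  | rdz a procs => exact hT.2.2 i fun j hj => hi ⟨j, hj⟩

lemma RBTrans.edgeAt_eq_some {P : RBTemplate k A S} {σ : Sync k A ι} {e : EdgeT k A S}
    (hT : RBTrans P f σ g) (h : edgeAt f g σ i = some e) :
    e ∈ P.R ∧ e.1 = f i ∧ e.2.2 = g i := by
  cases σ with
  | bcast =>
    cases Option.some.inj h
    exact ⟨hT i, rfl, rfl⟩
  | rdz a procs =>
    obtain ⟨j, rfl, rfl⟩ := exists_apply_eq_of_edgeAt_rdz_eq_some h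
    exact ⟨hT.2.1 j, rfl, rfl⟩

end edgeAt

namespace InfPath

variable {k : ℕ} {A S ι : Type} {P : RBTemplate k A S} (p : InfPath P ι)

lemma conf_eq_of_not_moved {i : ι} {a b : ℕ} (hab : a ≤ b)
    (h : ∀ u, a ≤ u → u < b → ¬ (p.sync u).Moved i) : p.conf a i = p.conf b i := by
  induction b, hab using Nat.le_induction with
  | base => rfl
  | succ b hab ih =>
    rw [ih fun u hu hub => h u hu (by omega),
      (p.valid b).apply_eq_of_not_moved (h b hab (by omega))]

def ProjectsTo (i : ι) (τ : ℕ → ℕ) (w : ℕ → EdgeT k A S) : Prop :=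
  StrictMono τ ∧ (∀ t, (p.sync t).Moved i ↔ ∃ m, τ m = t) ∧
    ∀ m, edgeAt (p.conf (τ m)) (p.conf (τ m + 1)) (p.sync (τ m)) i = some (w m)

lemma _root_.mem_execInf_iff {w : ℕ → EdgeT k A S} :
    w ∈ execInf P ↔ ∃ n, ∃ p : InfPath P (Fin (n + 1)), p.IsRun ∧ ∃ τ, p.ProjectsTo 0 τ w :=
  Iff.rfl

namespace ProjectsTo

variable {p} {i : ι} {τ : ℕ → ℕ} {w : ℕ → EdgeT k A S} (hw : p.ProjectsTo i τ w)
include hw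

lemma edge_spec (m : ℕ) :
    w m ∈ P.R ∧ (w m).1 = p.conf (τ m) i ∧ (w m).2.2 = p.conf (τ m + 1) i :=
  (p.valid (τ m)).edgeAt_eq_some (hw.2.2 m)

lemma not_moved {u m : ℕ} (hu : u < τ m) (hm : ∀ m' < m, τ m' < u) : ¬ (p.sync u).Moved i := by
  intro hmv
  obtain ⟨m', rfl⟩ := (hw.2.1 u).1 hmv
  rcases lt_or_ge m' m with h | h
  · exact lt_irrefl _ (hm m' h)
  · exact absurd (hw.1.monotone h) (not_le.2 hu)

lemma conf_zero_eq : p.conf 0 i = p.conf (τ 0) i :=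
  p.conf_eq_of_not_moved (Nat.zero_le _) fun _ _ hu =>
    hw.not_moved hu fun _ h => absurd h (Nat.not_lt_zero _)

lemma conf_succ_eq (m : ℕ) : p.conf (τ m + 1) i = p.conf (τ (m + 1)) i :=
  p.conf_eq_of_not_moved (hw.1 m.lt_succ_self) fun _ hu hu' => hw.not_moved hu' fun _ hm' =>
    lt_of_le_of_lt (hw.1.monotone (Nat.lt_succ_iff.1 hm')) hu

lemma sync_ne_bcast {u m : ℕ} (hu : τ m < u) (hu' : u < τ (m + 1)) : p.sync u ≠ .bcast :=
  fun h => hw.not_moved hu'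
    (fun _ hm' => lt_of_le_of_lt (hw.1.monotone (Nat.lt_succ_iff.1 hm')) hu) (h ▸ trivial)

lemma isInitPath (hrun : p.IsRun) : P.IsInitPath w := by
  refine ⟨?_, fun m => ⟨(hw.edge_spec m).1, ?_⟩⟩
  · rw [(hw.edge_spec 0).2.1, ← hw.conf_zero_eq]
    exact hrun i
  · rw [(hw.edge_spec m).2.2, (hw.edge_spec (m + 1)).2.1, hw.conf_succ_eq]

lemma exists_sync_eq_rdz {m : ℕ} {a : A} {j : Fin k} (h : (w m).2.1 = .inl (a, j)) :
    ∃ procs, p.sync (τ m) = .rdz a procs ∧ procs j = i := by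
  have he := hw.2.2 m
  cases hs : p.sync (τ m) with
  | bcast =>
    rw [hs, edgeAt, Option.some.injEq] at he
    rw [← he] at h
    cases h
  | rdz a' procs =>
    rw [hs] at he
    obtain ⟨j', hj', he'⟩ := exists_apply_eq_of_edgeAt_rdz_eq_some he
    rw [he'] at h
    cases h
    exact ⟨procs, rfl, hj'⟩

end ProjectsTo

end InfPath

namespace Pstar

lemma mem_R_iff {e : EdgeT 2 Unit Bool} : e ∈ Pstar.R ↔ e = e₁ ∨ e = e₂ ∨ e = bP ∨ e = bQ := by
  simp [Pstar, e₁, e₂, bP, bQ]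

lemma fst_eq_false_of_rdz {s t : Bool} {ς : Unit × Fin 2} (h : (s, .inl ς, t) ∈ Pstar.R) :
    s = false := by
  simp only [Pstar, Set.mem_insert_iff, Set.mem_singleton_iff] at h
  rcases h with h | h | h | h <;> simp_all

lemma bcast_mem_R (s : Bool) : (s, .inr (), false) ∈ Pstar.R := by
  cases s <;> simp [Pstar]

lemma eq_bQ_of_fst_eq_true {e : EdgeT 2 Unit Bool} (he : e ∈ Pstar.R) (h : e.1 = true) :
    e = bQ := by
  rcases mem_R_iff.1 he with rfl | rfl | rfl | rfl <;> simp_all [e₁, e₂, bP]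

end Pstar

def e₁Count (w : ℕ → EdgeT 2 Unit Bool) : ℕ → ℕ
  | 0 => 0
  | t + 1 => if w t = e₁ then e₁Count w t + 1 else if w t = e₂ then e₁Count w t else 0

section qProcs

variable {ι : Type} [Fintype ι] [DecidableEq ι] (p : InfPath Pstar ι) (i : ι)

def qProcs (u : ℕ) : Finset ι := {j | j ≠ i ∧ p.conf u j = true}

variable {p i}

lemma qProcs_subset_succ {u : ℕ} {a : Unit} {procs : Fin 2 → ι}
    (h : p.sync u = .rdz a procs) : qProcs p i u ⊆ qProcs p i (u + 1) := by
  have hT := p.valid u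
  rw [h] at hT
  intro j hj
  simp only [qProcs, Finset.mem_filter, Finset.mem_univ, true_and] at hj ⊢
  refine ⟨hj.1, ?_⟩
  by_cases hmv : ∃ l, procs l = j
  · obtain ⟨l, rfl⟩ := hmv
    have := Pstar.fst_eq_false_of_rdz (hT.2.1 l)
    simp_all
  · rw [hT.2.2 j fun l hl => hmv ⟨l, hl⟩, hj.2]

lemma qProcs_mono {a b : ℕ} (hab : a ≤ b) (h : ∀ u, a ≤ u → u < b → p.sync u ≠ .bcast) :
    qProcs p i a ⊆ qProcs p i b := by
  induction b, hab using Nat.le_induction with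
  | base => rfl
  | succ b hab ih =>
    refine (ih fun u hu hub => h u hu (by omega)).trans ?_
    cases hs : p.sync b with
    | bcast => exact absurd hs (h b hab (by omega))
    | rdz a procs => exact qProcs_subset_succ hs

namespace InfPath.ProjectsTo

variable {τ : ℕ → ℕ} {w : ℕ → EdgeT 2 Unit Bool} (hw : p.ProjectsTo i τ w)
include hw

lemma qProcs_subset_succ_of_rdz {m : ℕ} {ς : Unit × Fin 2} (h : (w m).2.1 = .inl ς) :
    qProcs p i (τ m) ⊆ qProcs p i (τ m + 1) := by
  obtain ⟨procs, hs, -⟩ := hw.exists_sync_eq_rdz h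
  exact qProcs_subset_succ hs

lemma qProcs_subset_next (m : ℕ) : qProcs p i (τ m + 1) ⊆ qProcs p i (τ (m + 1)) :=
  qProcs_mono (hw.1 m.lt_succ_self) fun _ hu hu' => hw.sync_ne_bcast hu hu'

lemma card_qProcs_lt_of_eq_e₁ {m : ℕ} (h : w m = e₁) :
    (qProcs p i (τ m)).card < (qProcs p i (τ m + 1)).card := by
  obtain ⟨procs, hs, hi⟩ := hw.exists_sync_eq_rdz (a := ()) (j := 0) (by rw [h]; rfl)
  have hT := p.valid (τ m)
  rw [hs] at hT
  obtain ⟨hinj, hedge, -⟩ := hT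
  have hpartner : procs 1 ≠ i := fun h1 => absurd (hinj (h1.trans hi.symm)) (by decide)
  obtain ⟨hsrc, htgt⟩ : p.conf (τ m) (procs 1) = false ∧ p.conf (τ m + 1) (procs 1) = true := by
    rcases Pstar.mem_R_iff.1 (hedge 1) with h | h | h | h <;> simp_all [e₁, e₂, bP, bQ]
  refine Finset.card_lt_card ⟨qProcs_subset_succ hs, fun hsub => ?_⟩
  have := hsub (Finset.mem_filter.2 ⟨Finset.mem_univ _, hpartner, htgt⟩)
  simp_all [qProcs]

lemma e₁Count_le_card_qProcs (m : ℕ) : e₁Count w m ≤ (qProcs p i (τ m)).card := by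
  induction m with
  | zero => exact Nat.zero_le _
  | succ m ih =>
    have hnext := Finset.card_le_card (hw.qProcs_subset_next m)
    simp only [e₁Count]
    split_ifs with h1 h2
    · have := hw.card_qProcs_lt_of_eq_e₁ h1
      omega
    · have := Finset.card_le_card (hw.qProcs_subset_succ_of_rdz (by rw [h2]; rfl))
      omega
    · exact Nat.zero_le _

lemma e₁Count_le (m : ℕ) : e₁Count w m ≤ Fintype.card ι - 1 := by
  have hsub : qProcs p i (τ m) ⊆ Finset.univ.erase i := fun j hj =>
    Finset.mem_erase.2 ⟨(Finset.mem_filter.1 hj).2.1, Finset.mem_univ _⟩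
  have := Finset.card_le_card hsub
  rw [Finset.card_erase_of_mem (Finset.mem_univ _), Finset.card_univ] at this
  exact (hw.e₁Count_le_card_qProcs m).trans this

end InfPath.ProjectsTo

end qProcs

def IsBlockWord (w : ℕ → EdgeT 2 Unit Bool) : Prop :=
  ∃ nn mm B : ℕ → ℕ,
    B 0 = 0 ∧
    (∀ i, mm i ≤ 1) ∧
    (∀ i, B (i + 1) = B i + nn i + mm i + 1) ∧
    (∀ i t, t < nn i → w (B i + t) = e₁) ∧
    (∀ i t, t < mm i → w (B i + nn i + t) = e₂) ∧
    (∀ i, w (B i + nn i + mm i) = if mm i = 1 then bQ else bP) ∧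
    (∃ N, ∀ᶠ i in Filter.atTop, nn i ≤ N)

section pathToBlocks

variable {w : ℕ → EdgeT 2 Unit Bool}

lemma le_e₁Count_add {b c : ℕ} (h : ∀ t < c, w (b + t) = e₁) : c ≤ e₁Count w (b + c) := by
  induction c with
  | zero => exact Nat.zero_le _
  | succ c ih =>
    rw [← add_assoc, e₁Count, if_pos (h c c.lt_succ_self)]
    exact Nat.succ_le_succ (ih fun t ht => h t (by omega))

lemma RBTemplate.IsInitPath.exists_block (hw : Pstar.IsInitPath w) {M : ℕ}
    (hM : ∀ t, e₁Count w t ≤ M) {b : ℕ} (hb : (w b).1 = false) :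
    ∃ n m, n ≤ M ∧ m ≤ 1 ∧ (∀ t < n, w (b + t) = e₁) ∧ (∀ t < m, w (b + n + t) = e₂) ∧
      w (b + n + m) = if m = 1 then bQ else bP := by
  classical
  have hex : ∃ n, w (b + n) ≠ e₁ := by
    by_contra! h
    have := (le_e₁Count_add fun t _ => h t).trans (hM (b + (M + 1)))
    omega
  set n := Nat.find hex
  have he₁ : ∀ t < n, w (b + t) = e₁ := fun t ht => not_not.1 (Nat.find_min hex ht)
  have hn : n ≤ M := (le_e₁Count_add he₁).trans (hM _)
  have hsrc : (w (b + n)).1 = false := by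
    rcases Nat.eq_zero_or_pos n with h | h
    · rwa [h]
    · rw [show b + n = b + (n - 1) + 1 by omega, ← (hw.2 _).2, he₁ _ (by omega)]
      rfl
  rcases Pstar.mem_R_iff.1 (hw.2 (b + n)).1 with h | h | h | h
  · exact absurd h (Nat.find_spec hex)
  · refine ⟨n, 1, hn, le_rfl, he₁, fun t ht => by rwa [Nat.lt_one_iff.1 ht], ?_⟩
    exact Pstar.eq_bQ_of_fst_eq_true (hw.2 _).1 (by rw [← (hw.2 _).2, h]; rfl)
  · exact ⟨n, 0, hn, zero_le_one, he₁, fun t ht => absurd ht (Nat.not_lt_zero t), h⟩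
  · rw [h] at hsrc
    cases hsrc

lemma RBTemplate.IsInitPath.isBlockWord (hw : Pstar.IsInitPath w) {M : ℕ}
    (hM : ∀ t, e₁Count w t ≤ M) : IsBlockWord w := by
  have hblock : ∀ b, ∃ n m, (w b).1 = false → n ≤ M ∧ m ≤ 1 ∧ (∀ t < n, w (b + t) = e₁) ∧
      (∀ t < m, w (b + n + t) = e₂) ∧ w (b + n + m) = if m = 1 then bQ else bP := by
    intro b
    by_cases hb : (w b).1 = false
    · obtain ⟨n, m, h⟩ := hw.exists_block hM hb
      exact ⟨n, m, fun _ => h⟩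
    · exact ⟨0, 0, fun h => absurd h hb⟩
  choose n m hblock using hblock
  let B : ℕ → ℕ := fun i => Nat.rec 0 (fun _ b => b + n b + m b + 1) i
  have hB : ∀ i, (w (B i)).1 = false := by
    intro i
    induction i with
    | zero => exact hw.1
    | succ i ih =>
      change (w (B i + n (B i) + m (B i) + 1)).1 = false
      rw [← (hw.2 _).2, (hblock _ ih).2.2.2.2]
      split_ifs <;> rfl
  refine ⟨fun i => n (B i), fun i => m (B i), B, rfl, fun i => (hblock _ (hB i)).2.1,
    fun _ => rfl, fun i => (hblock _ (hB i)).2.2.1, fun i => (hblock _ (hB i)).2.2.2.1,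
    fun i => (hblock _ (hB i)).2.2.2.2, M, Eventually.of_forall fun i => (hblock _ (hB i)).1⟩

end pathToBlocks

def blockEdge (n m r : ℕ) : EdgeT 2 Unit Bool :=
  if r < n then e₁ else if r < n + m then e₂ else if m = 1 then bQ else bP

section blockEdge

variable {n m r : ℕ}

lemma blockEdge_mem_R : blockEdge n m r ∈ Pstar.R := by
  unfold blockEdge
  split_ifs <;> simp [Pstar.mem_R_iff]

lemma blockEdge_zero_fst : (blockEdge n m 0).1 = false := by
  unfold blockEdge
  split_ifs <;> first | rfl | omega

lemma blockEdge_snd_snd (hm : m ≤ 1) (hr : r < n + m) :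
    (blockEdge n m r).2.2 = (blockEdge n m (r + 1)).1 := by
  unfold blockEdge
  split_ifs <;> first | rfl | omega

lemma blockEdge_last_snd_snd : (blockEdge n m (n + m)).2.2 = false := by
  unfold blockEdge
  split_ifs <;> first | rfl | omega

lemma e₁Count_succ_of_eq_blockEdge {w : ℕ → EdgeT 2 Unit Bool} {t : ℕ}
    (ht : w t = blockEdge n m r) :
    e₁Count w (t + 1) =
      if r < n then e₁Count w t + 1 else if r < n + m then e₁Count w t else 0 := by
  rw [e₁Count, ht]
  unfold blockEdge
  split_ifs <;> first | rfl | omega | simp_all [e₁, e₂, bP, bQ]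

end blockEdge

section blocksToPath

variable {w : ℕ → EdgeT 2 Unit Bool} {nn mm B : ℕ → ℕ}

lemma exists_eq_add_of_block (hB0 : B 0 = 0) (hBs : ∀ i, B (i + 1) = B i + nn i + mm i + 1)
    (t : ℕ) : ∃ i r, r ≤ nn i + mm i ∧ t = B i + r := by
  induction t with
  | zero => exact ⟨0, 0, Nat.zero_le _, hB0.symm⟩
  | succ t ih =>
    obtain ⟨i, r, hr, rfl⟩ := ih
    rcases hr.lt_or_eq with hr | rfl
    · exact ⟨i, r + 1, hr, rfl⟩
    · exact ⟨i + 1, 0, Nat.zero_le _, by rw [hBs]; omega⟩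

lemma eq_blockEdge (he₁ : ∀ i t, t < nn i → w (B i + t) = e₁)
    (he₂ : ∀ i t, t < mm i → w (B i + nn i + t) = e₂)
    (hbr : ∀ i, w (B i + nn i + mm i) = if mm i = 1 then bQ else bP) {i r : ℕ}
    (hr : r ≤ nn i + mm i) : w (B i + r) = blockEdge (nn i) (mm i) r := by
  by_cases h₁ : r < nn i
  · rw [blockEdge, if_pos h₁]
    exact he₁ i r h₁
  by_cases h₂ : r < nn i + mm i
  · rw [blockEdge, if_neg h₁, if_pos h₂, show B i + r = B i + nn i + (r - nn i) by omega]
    exact he₂ i _ (by omega)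
  · rw [blockEdge, if_neg h₁, if_neg h₂, show B i + r = B i + nn i + mm i by omega, hbr]

end blocksToPath

namespace IsBlockWord

variable {w : ℕ → EdgeT 2 Unit Bool} (hw : IsBlockWord w)
include hw

lemma isInitPath : Pstar.IsInitPath w := by
  obtain ⟨nn, mm, B, hB0, hmm, hBs, he₁, he₂, hbr, -⟩ := hw
  have hedge := fun {i r} => eq_blockEdge (w := w) he₁ he₂ hbr (i := i) (r := r)
  refine ⟨?_, fun t => ?_⟩
  · rw [← hB0, ← add_zero (B 0), hedge (Nat.zero_le _)]
    exact blockEdge_zero_fst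
  obtain ⟨i, r, hr, rfl⟩ := exists_eq_add_of_block hB0 hBs t
  refine ⟨hedge hr ▸ blockEdge_mem_R, ?_⟩
  rw [hedge hr]
  rcases hr.lt_or_eq with hr | rfl
  · rw [add_assoc, hedge hr]
    exact blockEdge_snd_snd (hmm i) hr
  · have hnext : B i + (nn i + mm i) + 1 = B (i + 1) + 0 := by rw [hBs]; omega
    rw [hnext, hedge (Nat.zero_le _), blockEdge_last_snd_snd, blockEdge_zero_fst]

lemma exists_e₁Count_le : ∃ M, ∀ t, e₁Count w t ≤ M := by
  obtain ⟨nn, mm, B, hB0, hmm, hBs, he₁, he₂, hbr, N, hN⟩ := hw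
  have hedge := fun {i r} => eq_blockEdge (w := w) he₁ he₂ hbr (i := i) (r := r)
  have hstart : ∀ i, e₁Count w (B i) = 0 := by
    intro i
    cases i with
    | zero => rw [hB0]; rfl
    | succ i =>
      rw [hBs, add_assoc (B i) (nn i), e₁Count_succ_of_eq_blockEdge (hedge le_rfl)]
      simp
  have hcount : ∀ i r, r ≤ nn i + mm i → e₁Count w (B i + r) ≤ min r (nn i) := by
    intro i r hr
    induction r with
    | zero => simp [hstart]
    | succ r ih =>
      rw [← add_assoc, e₁Count_succ_of_eq_blockEdge (hedge (by omega))]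
      have := ih (by omega)
      split_ifs <;> omega
  obtain ⟨M, hM⟩ := (IsBoundedUnder.bddAbove_range ⟨N, hN⟩ : BddAbove (Set.range nn))
  refine ⟨M, fun t => ?_⟩
  obtain ⟨i, r, hr, rfl⟩ := exists_eq_add_of_block hB0 hBs t
  exact (hcount i r hr).trans ((min_le_right _ _).trans (hM ⟨i, rfl⟩))

end IsBlockWord

section witness

variable (w : ℕ → EdgeT 2 Unit Bool) (M : ℕ)

def witnessConf (t : ℕ) (j : Fin (M + 2)) : Bool :=
  if j = 0 then (w t).1 else decide (j.val ≤ e₁Count w t)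

def witnessSync (t : ℕ) : Sync 2 Unit (Fin (M + 2)) :=
  if w t = e₁ then .rdz () ![0, Fin.ofNat (M + 2) (e₁Count w t + 1)]
  else if w t = e₂ then .rdz () ![Fin.last (M + 1), 0]
  else .bcast

variable {w M} {t : ℕ}

lemma witnessConf_of_ne_zero {j : Fin (M + 2)} (hj : j ≠ 0) :
    witnessConf w M t j = decide (j.val ≤ e₁Count w t) :=
  if_neg hj

variable (hw : Pstar.IsInitPath w)
include hw

lemma witnessConf_edge_zero (lab : Lab 2 Unit) (hlab : (w t).2.1 = lab) :
    ((witnessConf w M t 0, lab, witnessConf w M (t + 1) 0) : EdgeT 2 Unit Bool) = w t := by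
  simp only [witnessConf, if_pos, ← (hw.2 t).2, ← hlab]

lemma witness_step_of_eq_e₁ (hM : e₁Count w t ≤ M) (ht : w t = e₁) :
    RBTrans Pstar (witnessConf w M t) (witnessSync w M t) (witnessConf w M (t + 1)) ∧
      edgeAt (witnessConf w M t) (witnessConf w M (t + 1)) (witnessSync w M t) 0 = some (w t) := by
  set c := e₁Count w t
  set h : Fin (M + 2) := Fin.ofNat (M + 2) (c + 1)
  have hh : h.val = c + 1 := Nat.mod_eq_of_lt (by omega)
  have hh0 : h ≠ 0 := fun h0 => by simp [h0] at hh
  have hc : e₁Count w (t + 1) = c + 1 := by rw [e₁Count, if_pos ht]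
  have hs : witnessSync w M t = .rdz () ![0, h] := if_pos ht
  have hinj : Injective ![0, h] := injective_pair_iff_ne.2 hh0.symm
  have he : ((witnessConf w M t 0, .inl ((), 0), witnessConf w M (t + 1) 0) : EdgeT 2 Unit Bool)
      = w t := witnessConf_edge_zero hw _ (by rw [ht]; rfl)
  rw [hs, edgeAt_rdz_of_apply_eq (i := 0) (j := 0) hinj rfl, he]
  refine ⟨⟨hinj, Fin.forall_fin_two.2 ⟨?_, ?_⟩, fun j hj => ?_⟩, rfl⟩
  · simpa only [Matrix.cons_val_zero, he] using (hw.2 t).1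
  · simp only [Matrix.cons_val_one, Matrix.cons_val_zero, witnessConf_of_ne_zero hh0, hh, hc]
    simp [Pstar, c]
  · have hj0 : j ≠ 0 := fun h0 => hj 0 h0.symm
    have hjh : j.val ≠ c + 1 := fun h' => hj 1 (Fin.ext (by simp [hh, h']))
    simp only [witnessConf_of_ne_zero hj0, hc]
    exact decide_eq_decide.2 (by omega)

lemma witness_step_of_eq_e₂ (hM : e₁Count w t ≤ M) (ht : w t = e₂) :
    RBTrans Pstar (witnessConf w M t) (witnessSync w M t) (witnessConf w M (t + 1)) ∧
      edgeAt (witnessConf w M t) (witnessConf w M (t + 1)) (witnessSync w M t) 0 = some (w t) := by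
  have hne : w t ≠ e₁ := by rw [ht]; decide
  have hc : e₁Count w (t + 1) = e₁Count w t := by rw [e₁Count, if_neg hne, if_pos ht]
  have hs : witnessSync w M t = .rdz () ![Fin.last (M + 1), 0] := by
    rw [witnessSync, if_neg hne, if_pos ht]
  have hlast : Fin.last (M + 1) ≠ 0 := Fin.last_pos.ne'
  have hinj : Injective ![Fin.last (M + 1), 0] := injective_pair_iff_ne.2 hlast
  have he : ((witnessConf w M t 0, .inl ((), 1), witnessConf w M (t + 1) 0) : EdgeT 2 Unit Bool)
      = w t := witnessConf_edge_zero hw _ (by rw [ht]; rfl)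
  rw [hs, edgeAt_rdz_of_apply_eq (i := 0) (j := 1) hinj rfl, he]
  refine ⟨⟨hinj, Fin.forall_fin_two.2 ⟨?_, ?_⟩, fun j hj => ?_⟩, rfl⟩
  · simp only [Matrix.cons_val_zero, witnessConf_of_ne_zero hlast, hc, Fin.val_last]
    simp [Pstar, hM]
  · simpa only [Matrix.cons_val_one, Matrix.cons_val_zero, he] using (hw.2 t).1
  · simp only [witnessConf_of_ne_zero (fun h0 => hj 1 h0.symm), hc]

lemma witness_step_of_bcast (ht₁ : w t ≠ e₁) (ht₂ : w t ≠ e₂) :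
    RBTrans Pstar (witnessConf w M t) (witnessSync w M t) (witnessConf w M (t + 1)) ∧
      edgeAt (witnessConf w M t) (witnessConf w M (t + 1)) (witnessSync w M t) 0 = some (w t) := by
  have hs : witnessSync w M t = .bcast := by rw [witnessSync, if_neg ht₁, if_neg ht₂]
  have hc : e₁Count w (t + 1) = 0 := by rw [e₁Count, if_neg ht₁, if_neg ht₂]
  obtain ⟨hlab, htgt⟩ : (w t).2.1 = .inr () ∧ (w t).2.2 = false := by
    rcases Pstar.mem_R_iff.1 (hw.2 t).1 with h | h | h | h
    · exact absurd h ht₁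
    · exact absurd h ht₂
    all_goals rw [h]; exact ⟨rfl, rfl⟩
  have hnext : ∀ j, witnessConf w M (t + 1) j = false := by
    intro j
    by_cases hj : j = 0
    · rw [hj, witnessConf, if_pos rfl, ← (hw.2 t).2, htgt]
    · simp [witnessConf_of_ne_zero hj, hc, Fin.val_ne_zero_iff.2 hj]
  rw [hs]
  exact ⟨fun j => hnext j ▸ Pstar.bcast_mem_R _, congrArg some (witnessConf_edge_zero hw _ hlab)⟩

lemma witness_step (hM : e₁Count w t ≤ M) :
    RBTrans Pstar (witnessConf w M t) (witnessSync w M t) (witnessConf w M (t + 1)) ∧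
      edgeAt (witnessConf w M t) (witnessConf w M (t + 1)) (witnessSync w M t) 0 = some (w t) := by
  by_cases h₁ : w t = e₁
  · exact witness_step_of_eq_e₁ hw hM h₁
  by_cases h₂ : w t = e₂
  · exact witness_step_of_eq_e₂ hw hM h₂
  · exact witness_step_of_bcast hw h₁ h₂

lemma RBTemplate.IsInitPath.mem_execInf (hM : ∀ t, e₁Count w t ≤ M) : w ∈ execInf Pstar := by
  have hstep := fun t => witness_step (t := t) hw (hM t)
  have hmoved : ∀ t, (witnessSync w M t).Moved 0 := by
    intro t
    unfold witnessSync
    split_ifs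
    exacts [⟨0, rfl⟩, ⟨1, rfl⟩, trivial]
  refine ⟨M + 1, ⟨witnessConf w M, witnessSync w M, fun t => (hstep t).1⟩, fun j => ?_, id,
    strictMono_id, fun t => ⟨fun _ => ⟨t, rfl⟩, fun _ => hmoved t⟩, fun t => (hstep t).2⟩
  by_cases hj : j = 0
  · rw [hj]
    exact hw.1
  · simp [witnessConf_of_ne_zero hj, e₁Count, Fin.val_ne_zero_iff.2 hj, Pstar]

end witness

/-- `exec_inf(P⋆)` is exactly the set of infinite edge sequences of
the form `e₁^{n_1} e₂^{m_1} β_1 e₁^{n_2} e₂^{m_2} β_2 ⋯` where each `m_i ∈ {0,1}`,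
`β_i = b_q` if `m_i = 1` and `β_i = b_p` otherwise, and `limsup n_i < ∞`
(equivalently: the `n_i` are eventually bounded by some `N`).  The `i`-th block
starts at position `B i`. -/
theorem execInf_pstar_characterization :
    execInf Pstar =
      {w | ∃ nn mm B : ℕ → ℕ,
        B 0 = 0 ∧
        (∀ i, mm i ≤ 1) ∧
        (∀ i, B (i + 1) = B i + nn i + mm i + 1) ∧
        (∀ i t, t < nn i → w (B i + t) = e₁) ∧
        (∀ i t, t < mm i → w (B i + nn i + t) = e₂) ∧
        (∀ i, w (B i + nn i + mm i) = if mm i = 1 then bQ else bP) ∧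
        (∃ N, ∀ᶠ i in Filter.atTop, nn i ≤ N)} := by
  ext w
  constructor
  · intro h
    obtain ⟨n, p, hrun, τ, hw⟩ := mem_execInf_iff.1 h
    exact (hw.isInitPath hrun).isBlockWord hw.e₁Count_le
  · intro (hw : IsBlockWord w)
    obtain ⟨M, hM⟩ := hw.exists_e₁Count_le
    exact hw.isInitPath.mem_execInf hM
end

section
/- Let P⋆ be the RB-template with k = 2, states {p,q}, initial states {p}, one rendezvous action a, rendezvous edges (p,a_1,p) and (p,a_2,q), and broadcast edges (p,𝔟,p) and (q,𝔟,p). Then for every n ∈ ℕ, in every infinite run of the system P⋆^n there are at most n−1 consecutive rendezvous transitions: every contiguous segment of the run consisting solely of rendezvous transitions has length at most n−1, and hence between any two broadcast transitions (and before the first broadcast transition) at most n−1 rendezvous transitions occur. -/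
/-!
Count the processes in state `q`. A rendezvous of `P⋆` needs two distinct processes in `p`
and moves exactly one of them to `q`, so only broadcasts can lower the count. After `m`
consecutive rendezvous at least `m` processes are in `q`; one more rendezvous needs two
further processes in `p`, whence `m + 2 ≤ n` for a segment of length `m + 1`.
-/

open Finset

namespace Pstar

lemma mem_R_rdz_zero {a : Unit} {s t : Bool} :
    (s, Sum.inl (a, 0), t) ∈ Pstar.R ↔ s = false ∧ t = false := by
  simp [Pstar]

lemma mem_R_rdz_one {a : Unit} {s t : Bool} :
    (s, Sum.inl (a, 1), t) ∈ Pstar.R ↔ s = false ∧ t = true := by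
  simp [Pstar]

variable {ι : Type} [DecidableEq ι]

lemma eq_update_of_rbTrans_rdz {f g : ι → Bool} {a : Unit} {procs : Fin 2 → ι}
    (h : RBTrans Pstar f (.rdz a procs) g) :
    procs 0 ≠ procs 1 ∧ f (procs 0) = false ∧ f (procs 1) = false ∧
      g = Function.update f (procs 1) true := by
  obtain ⟨hinj, hedge, hidle⟩ := h
  obtain ⟨hf0, hg0⟩ := mem_R_rdz_zero.mp (hedge 0)
  obtain ⟨hf1, hg1⟩ := mem_R_rdz_one.mp (hedge 1)
  have hne : procs 0 ≠ procs 1 := hinj.ne (by decide)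
  refine ⟨hne, hf0, hf1, funext fun i => ?_⟩
  by_cases hi1 : i = procs 1
  · simp [hi1, hg1]
  by_cases hi0 : i = procs 0
  · simp [hi0, hne, hg0, hf0]
  rw [Function.update_of_ne hi1, hidle i]
  intro k
  fin_cases k
  exacts [Ne.symm hi0, Ne.symm hi1]

variable [Fintype ι]

def numQ (f : ι → Bool) : ℕ := #{i | f i = true}

lemma numQ_update_true {f : ι → Bool} {j : ι} (hj : f j = false) :
    numQ (Function.update f j true) = numQ f + 1 := by
  unfold numQ
  rw [← card_insert_of_notMem (a := j) (by simp [hj])]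
  congr 1
  ext i
  by_cases hij : i = j <;> simp [hij]

lemma numQ_add_two_le {f : ι → Bool} {j j' : ι} (hne : j ≠ j') (hj : f j = false)
    (hj' : f j' = false) : numQ f + 2 ≤ Fintype.card ι := by
  have hcard := card_le_univ (insert j (insert j' ({i | f i = true} : Finset ι)))
  rwa [card_insert_of_notMem (by simp [hne, hj]), card_insert_of_notMem (by simp [hj'])]
    at hcard

lemma numQ_of_rbTrans_ne_bcast {f g : ι → Bool} {σ : Sync 2 Unit ι}
    (h : RBTrans Pstar f σ g) (hσ : σ ≠ .bcast) :
    numQ g = numQ f + 1 ∧ numQ f + 2 ≤ Fintype.card ι := by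
  cases σ with
  | bcast => exact absurd rfl hσ
  | rdz a procs =>
    obtain ⟨hne, hf0, hf1, rfl⟩ := eq_update_of_rbTrans_rdz h
    exact ⟨numQ_update_true hf1, numQ_add_two_le hne hf0 hf1⟩

lemma numQ_add_le_of_no_bcast (p : InfPath Pstar ι) {i m : ℕ}
    (h : ∀ t, i ≤ t → t < i + m → p.sync t ≠ Sync.bcast) :
    numQ (p.conf i) + m ≤ numQ (p.conf (i + m)) := by
  induction m with
  | zero => rfl
  | succ m ih =>
    have hstep := numQ_of_rbTrans_ne_bcast (p.valid (i + m)) (h (i + m) (by omega) (by omega))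
    have ih := ih fun t hi ht => h t hi (by omega)
    rw [← add_assoc i m 1, hstep.1]
    omega

end Pstar

open Pstar in
theorem pstar_bounded_consecutive_rendezvous_general
    (n : ℕ) (p : InfPath Pstar (Fin n)) :
    ∀ i L : ℕ, (∀ t, i ≤ t → t < i + L → p.sync t ≠ Sync.bcast) → L ≤ n - 1 := by
  intro i L hL
  rcases L with _ | L
  · exact Nat.zero_le _
  have hgrow := numQ_add_le_of_no_bcast p (m := L) fun t hi ht => hL t hi (by omega)
  have hlast := numQ_of_rbTrans_ne_bcast (p.valid (i + L)) (hL (i + L) (by omega) (by omega))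
  rw [Fintype.card_fin] at hlast
  omega

/-- In every infinite run of `P⋆^n`, every contiguous segment
consisting solely of rendezvous transitions has length at most `n - 1`. -/
theorem pstar_bounded_consecutive_rendezvous
    (n : ℕ) (p : InfPath Pstar (Fin n)) (hrun : p.IsRun) :
    ∀ i L : ℕ, (∀ t, i ≤ t → t < i + L → p.sync t ≠ Sync.bcast) → L ≤ n - 1 :=
  pstar_bounded_consecutive_rendezvous_general n p
end

section
/- For every discrete timed network template T = (Q, I, R_T) with clock set C, per-letter reset commands r(a_i) ⊆ C and guards p(a_i), there exists an RB-template P (with the same rendezvous alphabet Σ_rdz and a broadcast letter 𝔟 modeling the advance of time by one unit) such that exec(P) = exec(T): the projections onto a single process of the runs of the RB-systems P^n, over all n ∈ ℕ, coincide (under the correspondence that identifies a 𝔟-edge of P with a time step of T, and a rendezvous edge of P with the corresponding guarded rendezvous edge of T) with the projections onto a single process of the runs of the timed networks T^n, over all n ∈ ℕ. Moreover, P can be taken finite: clock values larger than the greatest constant c_max appearing in the guards are collapsed to a single abstract value, so P has at most |Q|·(c_max+2)^{|C|} states. -/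
/-! ### Discrete timed networks -/

/-- Clock guards: Boolean combinations of predicates `c < x` and `c = x`
(`c ∈ ℕ` a constant, `x` a clock). -/
inductive Guard (C : Type) where
  | lt (c : ℕ) (x : C) : Guard C
  | eq (c : ℕ) (x : C) : Guard C
  | not (g : Guard C) : Guard C
  | and (g₁ g₂ : Guard C) : Guard C
  | or (g₁ g₂ : Guard C) : Guard C

/-- Satisfaction of a guard by a clock valuation. -/
def Guard.sat {C : Type} : Guard C → (C → ℕ) → Prop
  | .lt c x, v => c < v x
  | .eq c x, v => c = v x
  | .not g, v => ¬ g.sat v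
  | .and g₁ g₂, v => g₁.sat v ∧ g₂.sat v
  | .or g₁ g₂, v => g₁.sat v ∨ g₂.sat v

/-- The greatest constant appearing in a guard. -/
def Guard.maxC {C : Type} : Guard C → ℕ
  | .lt c _ => c
  | .eq c _ => c
  | .not g => g.maxC
  | .and g₁ g₂ => max g₁.maxC g₂.maxC
  | .or g₁ g₂ => max g₁.maxC g₂.maxC

/-- A discrete timed network template: control states `Q`, initial states, edges
labeled by rendezvous letters, and, for each letter, a reset command and a guard. -/
structure TNTemplate (k : ℕ) (A Q C : Type) where
  I : Set Q
  R : Set (Q × (A × Fin k) × Q)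
  reset : A × Fin k → Set C
  guard : A × Fin k → Guard C

/-- Synchronization label of a step of a timed network with `n` processes:
either a time step (all clocks advance by one) or a `k`-wise rendezvous. -/
inductive TSync (k : ℕ) (A : Type) (n : ℕ) where
  | time : TSync k A n
  | rdz (a : A) (procs : Fin k → Fin n) : TSync k A n

/-- Global steps of the timed network `T^n`.  Local states are pairs
(control state, clock valuation). -/
def TNTrans {k : ℕ} {A Q C : Type} (T : TNTemplate k A Q C) {n : ℕ}
    (f : Fin n → Q × (C → ℕ)) (σ : TSync k A n) (g : Fin n → Q × (C → ℕ)) : Prop :=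
  match σ with
  | .time => ∀ i, (g i).1 = (f i).1 ∧ ∀ x, (g i).2 x = (f i).2 x + 1
  | .rdz a procs =>
      Function.Injective procs ∧
      (∀ j : Fin k, ((f (procs j)).1, (a, j), (g (procs j)).1) ∈ T.R ∧
        (T.guard (a, j)).sat (f (procs j)).2 ∧
        (∀ x ∈ T.reset (a, j), (g (procs j)).2 x = 0) ∧
        (∀ x ∉ T.reset (a, j), (g (procs j)).2 x = (f (procs j)).2 x)) ∧
      (∀ i, (∀ j, procs j ≠ i) → g i = f i)

/-- Process `i` moves in a step with label `σ` (in every time step, and in a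
rendezvous only if it participates). -/
def TSync.Moved {k : ℕ} {A : Type} {n : ℕ} (σ : TSync k A n) (i : Fin n) : Prop :=
  match σ with
  | .time => True
  | .rdz _ procs => ∃ j, procs j = i

/-- The letter contributed to the projection of process `i` by the step `(f, σ, g)`:
`some none` for a time step, `some (some (q, a_j, q'))` if `i` takes the edge
`(q, a_j, q')` in a rendezvous, `none` if `i` does not move. -/
noncomputable def tEdgeAt {k : ℕ} {A Q C : Type} {n : ℕ}
    (f g : Fin n → Q × (C → ℕ)) (σ : TSync k A n) (i : Fin n) :
    Option (Option (Q × (A × Fin k) × Q)) :=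
  match σ with
  | .time => some none
  | .rdz a procs =>
      letI := Classical.propDecidable (∃ j, procs j = i)
      if h : ∃ j, procs j = i then
        some (some ((f i).1, (a, Classical.choose h), (g i).1))
      else none

/-- A finite path of the timed network `T^n`. -/
structure TNFinPath {k : ℕ} {A Q C : Type} (T : TNTemplate k A Q C) (n : ℕ) where
  len : ℕ
  conf : ℕ → Fin n → Q × (C → ℕ)
  sync : ℕ → TSync k A n
  valid : ∀ t, t < len → TNTrans T (conf t) (sync t) (conf (t + 1))

/-- An infinite path of the timed network `T^n`. -/
structure TNInfPath {k : ℕ} {A Q C : Type} (T : TNTemplate k A Q C) (n : ℕ) where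
  conf : ℕ → Fin n → Q × (C → ℕ)
  sync : ℕ → TSync k A n
  valid : ∀ t, TNTrans T (conf t) (sync t) (conf (t + 1))

/-- A run starts with every process in an initial control state with all clocks `0`. -/
def TNFinPath.IsRun {k : ℕ} {A Q C : Type} {T : TNTemplate k A Q C} {n : ℕ}
    (p : TNFinPath T n) : Prop :=
  ∀ i, (p.conf 0 i).1 ∈ T.I ∧ ∀ x, (p.conf 0 i).2 x = 0

def TNInfPath.IsRun {k : ℕ} {A Q C : Type} {T : TNTemplate k A Q C} {n : ℕ}
    (p : TNInfPath T n) : Prop :=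
  ∀ i, (p.conf 0 i).1 ∈ T.I ∧ ∀ x, (p.conf 0 i).2 x = 0

/-- The projection of a finite path of `T^n` onto process `i`. -/
noncomputable def TNFinPath.proj {k : ℕ} {A Q C : Type} {T : TNTemplate k A Q C} {n : ℕ}
    (p : TNFinPath T n) (i : Fin n) : List (Option (Q × (A × Fin k) × Q)) :=
  (List.range p.len).filterMap (fun t => tEdgeAt (p.conf t) (p.conf (t + 1)) (p.sync t) i)

/-- The finite executions of the timed network induced by `T`. -/
def execFinTN {k : ℕ} {A Q C : Type} (T : TNTemplate k A Q C) :
    Set (List (Option (Q × (A × Fin k) × Q))) :=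
  {w | ∃ n : ℕ, ∃ p : TNFinPath T (n + 1), p.IsRun ∧ p.proj 0 = w}

/-- The infinite executions of the timed network induced by `T`. -/
def execInfTN {k : ℕ} {A Q C : Type} (T : TNTemplate k A Q C) :
    Set (ℕ → Option (Q × (A × Fin k) × Q)) :=
  {w | ∃ n : ℕ, ∃ p : TNInfPath T (n + 1), p.IsRun ∧
    ∃ ι : ℕ → ℕ, StrictMono ι ∧
      (∀ t, (p.sync t).Moved 0 ↔ ∃ m, ι m = t) ∧
      (∀ m, tEdgeAt (p.conf (ι m)) (p.conf (ι m + 1)) (p.sync (ι m)) 0 = some (w m))}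

/-- The correspondence between edges of the RB-template `P` (whose states project to
control states of `T` via `h`) and steps of `T`: a broadcast edge corresponds to a
time step (`none`), a rendezvous edge to the corresponding edge of `T`. -/
def edgeToTLet {k : ℕ} {A SP Q : Type} (h : SP → Q) (e : EdgeT k A SP) :
    Option (Q × (A × Fin k) × Q) :=
  match e.2.1 with
  | Sum.inr _ => none
  | Sum.inl ς => some (h e.1, ς, h e.2.2)

/-! Guards only compare clocks with constants `≤ N`, so a clock value `m` can be replaced by its
region `min m (N + 1)` without changing which guards hold, and regions still evolve
deterministically: a tick sends the region of `m` to that of `m + 1`, a reset sends it to `0`.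
Capping every local state therefore maps runs of `T^n` to runs of the finite RB-system with the
same control states. Conversely a run of the RB-system is concretized step by step, starting from
all clocks `0`: a broadcast adds one to every clock, and in a rendezvous a clock keeps its value if
its region did not change and is reset otherwise. Both translations keep every process's sequence
of control-state edges, hence its projection. -/

variable {k : ℕ} {A Q C : Type}

def capClock (N m : ℕ) : Fin (N + 2) := ⟨min m (N + 1), by omega⟩

@[simp]
theorem val_capClock (N m : ℕ) : (capClock N m : ℕ) = min m (N + 1) := rfl

@[simp]
theorem capClock_zero (N : ℕ) : capClock N 0 = 0 := by
  ext; simp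

theorem capClock_eq_zero_iff {N m : ℕ} : capClock N m = 0 ↔ m = 0 := by
  simp [Fin.ext_iff]

theorem capClock_succ_capClock (N m : ℕ) :
    capClock N ((capClock N m : ℕ) + 1) = capClock N (m + 1) := by
  ext; simp

theorem Guard.sat_capClock {N : ℕ} (g : Guard C) (hg : g.maxC ≤ N) (v : C → ℕ) :
    g.sat (fun x => (capClock N (v x) : ℕ)) ↔ g.sat v := by
  induction g with
  | lt c x => simp only [Guard.maxC] at hg; simp only [Guard.sat, val_capClock]; omega
  | eq c x => simp only [Guard.maxC] at hg; simp only [Guard.sat, val_capClock]; omega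
  | not g ih => exact not_congr (ih hg)
  | and g₁ g₂ ih₁ ih₂ =>
      simp only [Guard.maxC, max_le_iff] at hg
      exact and_congr (ih₁ hg.1) (ih₂ hg.2)
  | or g₁ g₂ ih₁ ih₂ =>
      simp only [Guard.maxC, max_le_iff] at hg
      exact or_congr (ih₁ hg.1) (ih₂ hg.2)

def capState (N : ℕ) (s : Q × (C → ℕ)) : Q × (C → Fin (N + 2)) :=
  (s.1, fun x => capClock N (s.2 x))

/-- `val` reads clock values as naturals: `id` for `T` itself, `Fin.val` for its region
abstraction. -/
def TNTemplate.Move (T : TNTemplate k A Q C) {V : Type} [Zero V] (val : V → ℕ)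
    (ς : A × Fin k) (s t : Q × (C → V)) : Prop :=
  (s.1, ς, t.1) ∈ T.R ∧ (T.guard ς).sat (fun x => val (s.2 x)) ∧
    (∀ x ∈ T.reset ς, t.2 x = 0) ∧ (∀ x ∉ T.reset ς, t.2 x = s.2 x)

def tick (N : ℕ) (s : Q × (C → Fin (N + 2))) : Q × (C → Fin (N + 2)) :=
  (s.1, fun x => capClock N (s.2 x + 1))

def TNTemplate.regionTemplate (T : TNTemplate k A Q C) (N : ℕ) :
    RBTemplate k A (Q × (C → Fin (N + 2))) where
  I := {s | s.1 ∈ T.I ∧ s.2 = 0}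
  R := {e | match e.2.1 with
    | .inr _ => e.2.2 = tick N e.1
    | .inl ς => T.Move Fin.val ς e.1 e.2.2}

theorem TNTemplate.regionTemplate_bTotal (T : TNTemplate k A Q C) (N : ℕ) :
    (T.regionTemplate N).BTotal :=
  fun s => ⟨tick N s, rfl⟩

theorem tick_capState {N : ℕ} (s : Q × (C → ℕ)) :
    tick N (capState N s) = capState N (s.1, fun x => s.2 x + 1) := by
  simp only [tick, capState, capClock_succ_capClock]

/-- The concrete successor of `s` whose region is `t'`: a clock whose region changed
must have been reset. -/
def concretize (N : ℕ) (s : Q × (C → ℕ)) (t' : Q × (C → Fin (N + 2))) : Q × (C → ℕ) :=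
  (t'.1, fun x => if t'.2 x = capClock N (s.2 x) then s.2 x else 0)

section Local

variable {T : TNTemplate k A Q C} {N : ℕ}

theorem concretize_capState_self (s : Q × (C → ℕ)) : concretize N s (capState N s) = s := by
  simp [concretize, capState]

theorem concretize_snd_of_eq_zero {s : Q × (C → ℕ)} {t' : Q × (C → Fin (N + 2))} {x : C}
    (h : t'.2 x = 0) : (concretize N s t').2 x = 0 := by
  simp only [concretize, h]
  split_ifs with hs
  exacts [capClock_eq_zero_iff.mp hs.symm, rfl]

theorem concretize_snd_of_eq {s : Q × (C → ℕ)} {t' : Q × (C → Fin (N + 2))} {x : C}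
    (h : t'.2 x = capClock N (s.2 x)) : (concretize N s t').2 x = s.2 x := by
  simp only [concretize, h, if_true]

theorem move_capState (hN : ∀ ς, (T.guard ς).maxC ≤ N) {ς : A × Fin k} {s t : Q × (C → ℕ)}
    (h : T.Move id ς s t) : T.Move Fin.val ς (capState N s) (capState N t) := by
  obtain ⟨hR, hsat, hreset, hkeep⟩ := h
  refine ⟨hR, (Guard.sat_capClock _ (hN ς) _).mpr hsat, fun x hx => ?_, fun x hx => ?_⟩
  · simp [capState, hreset x hx]
  · simp [capState, hkeep x hx]

theorem move_concretize (hN : ∀ ς, (T.guard ς).maxC ≤ N) {ς : A × Fin k} {s : Q × (C → ℕ)}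
    {t' : Q × (C → Fin (N + 2))} (h : T.Move Fin.val ς (capState N s) t') :
    T.Move id ς s (concretize N s t') ∧ capState N (concretize N s t') = t' := by
  obtain ⟨hR, hsat, hreset, hkeep⟩ := h
  refine ⟨⟨hR, (Guard.sat_capClock _ (hN ς) _).mp hsat, fun x hx => ?_, fun x hx => ?_⟩, ?_⟩
  · exact concretize_snd_of_eq_zero (hreset x hx)
  · exact concretize_snd_of_eq (hkeep x hx)
  · refine Prod.ext rfl (funext fun x => ?_)
    by_cases hx : x ∈ T.reset ς
    · simp only [capState, concretize_snd_of_eq_zero (hreset x hx), capClock_zero, hreset x hx]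
    · simp only [capState, concretize_snd_of_eq (hkeep x hx), hkeep x hx]

end Local

def syncEquiv {n : ℕ} : TSync k A n ≃ Sync k A (Fin n) where
  toFun
    | .time => .bcast
    | .rdz a procs => .rdz a procs
  invFun
    | .bcast => .time
    | .rdz a procs => .rdz a procs
  left_inv σ := by cases σ <;> rfl
  right_inv σ := by cases σ <;> rfl

theorem moved_syncEquiv {n : ℕ} (σ : TSync k A n) (i : Fin n) :
    (syncEquiv σ).Moved i ↔ σ.Moved i := by
  cases σ <;> rfl

theorem map_edgeAt_syncEquiv {S : Type} (h : S → Q) {n : ℕ} {f g : Fin n → Q × (C → ℕ)}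
    {f' g' : Fin n → S} (hf : ∀ i, h (f' i) = (f i).1) (hg : ∀ i, h (g' i) = (g i).1)
    (σ : TSync k A n) (i : Fin n) :
    Option.map (edgeToTLet h) (edgeAt f' g' (syncEquiv σ) i) = tEdgeAt f g σ i := by
  cases σ with
  | time => rfl
  | rdz a procs =>
      show Option.map _ (edgeAt f' g' (.rdz a procs) i) = _
      simp only [edgeAt, tEdgeAt]
      by_cases hi : ∃ j, procs j = i
      · rw [dif_pos hi, dif_pos hi]
        simp [edgeToTLet, hf, hg]
      · rw [dif_neg hi, dif_neg hi]
        rfl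

theorem map_edgeAt_capState {N n : ℕ} (f g : Fin n → Q × (C → ℕ)) (σ : TSync k A n)
    (i : Fin n) :
    Option.map (edgeToTLet Prod.fst) (edgeAt (capState N ∘ f) (capState N ∘ g) (syncEquiv σ) i)
      = tEdgeAt f g σ i :=
  map_edgeAt_syncEquiv (f' := capState N ∘ f) (g' := capState N ∘ g) Prod.fst
    (fun _ => rfl) (fun _ => rfl) σ i

section Simulation

variable {T : TNTemplate k A Q C} {N : ℕ} {n : ℕ}

theorem rbTrans_capState (hN : ∀ ς, (T.guard ς).maxC ≤ N) {f g : Fin n → Q × (C → ℕ)}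
    {σ : TSync k A n} (h : TNTrans T f σ g) :
    RBTrans (T.regionTemplate N) (capState N ∘ f) (syncEquiv σ) (capState N ∘ g) := by
  cases σ with
  | time =>
      intro i
      obtain ⟨hq, hx⟩ := h i
      have hg : g i = ((f i).1, fun x => (f i).2 x + 1) := Prod.ext hq (funext hx)
      show capState N (g i) = tick N (capState N (f i))
      rw [hg, tick_capState]
  | rdz a procs =>
      obtain ⟨hinj, hmove, hidle⟩ := h
      exact ⟨hinj, fun j => move_capState hN (hmove j), fun i hi => by simp [hidle i hi]⟩

def concreteStep (N : ℕ) (f : Fin n → Q × (C → ℕ)) (g' : Fin n → Q × (C → Fin (N + 2))) :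
    Sync k A (Fin n) → Fin n → Q × (C → ℕ)
  | .bcast => fun i => ((g' i).1, fun x => (f i).2 x + 1)
  | .rdz _ _ => fun i => concretize N (f i) (g' i)

theorem tnTrans_concreteStep (hN : ∀ ς, (T.guard ς).maxC ≤ N) {f : Fin n → Q × (C → ℕ)}
    {g' : Fin n → Q × (C → Fin (N + 2))} {σ' : Sync k A (Fin n)}
    (h : RBTrans (T.regionTemplate N) (capState N ∘ f) σ' g') :
    TNTrans T f (syncEquiv.symm σ') (concreteStep N f g' σ') ∧
      capState N ∘ concreteStep N f g' σ' = g' := by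
  cases σ' with
  | bcast =>
      have hg : ∀ i, g' i = capState N ((f i).1, fun x => (f i).2 x + 1) :=
        fun i => (h i).trans (tick_capState _)
      refine ⟨fun i => ⟨?_, fun x => rfl⟩, funext fun i => ?_⟩
      · show (g' i).1 = (f i).1
        rw [hg i]
        rfl
      · show capState N ((g' i).1, fun x => (f i).2 x + 1) = g' i
        rw [hg i]
        rfl
  | rdz a procs =>
      obtain ⟨hinj, hmove, hidle⟩ := h
      have hidle' : ∀ i, (∀ j, procs j ≠ i) → concretize N (f i) (g' i) = f i :=
        fun i hi => by rw [hidle i hi]; exact concretize_capState_self _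
      refine ⟨⟨hinj, fun j => (move_concretize hN (hmove j)).1, hidle'⟩, funext fun i => ?_⟩
      by_cases hi : ∃ j, procs j = i
      · obtain ⟨j, rfl⟩ := hi
        exact (move_concretize hN (hmove j)).2
      · have hi' : ∀ j, procs j ≠ i := fun j hj => hi ⟨j, hj⟩
        show capState N (concretize N (f i) (g' i)) = g' i
        rw [hidle' i hi']
        exact (hidle i hi').symm

def liftConf (N : ℕ) (pc : ℕ → Fin n → Q × (C → Fin (N + 2))) (ps : ℕ → Sync k A (Fin n)) :
    ℕ → Fin n → Q × (C → ℕ)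
  | 0 => fun i => ((pc 0 i).1, 0)
  | t + 1 => concreteStep N (liftConf N pc ps t) (pc (t + 1)) (ps t)

theorem fst_liftConf (pc : ℕ → Fin n → Q × (C → Fin (N + 2))) (ps : ℕ → Sync k A (Fin n)) :
    ∀ t i, (liftConf N pc ps t i).1 = (pc t i).1
  | 0, _ => rfl
  | t + 1, i => by
      simp only [liftConf]
      cases ps t <;> rfl

theorem capState_liftConf (hN : ∀ ς, (T.guard ς).maxC ≤ N)
    {pc : ℕ → Fin n → Q × (C → Fin (N + 2))} {ps : ℕ → Sync k A (Fin n)}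
    (h0 : ∀ i, pc 0 i ∈ (T.regionTemplate N).I) :
    ∀ t, (∀ s < t, RBTrans (T.regionTemplate N) (pc s) (ps s) (pc (s + 1))) →
      capState N ∘ liftConf N pc ps t = pc t
  | 0, _ => funext fun i => Prod.ext rfl (by rw [(h0 i).2]; funext x; exact capClock_zero N)
  | t + 1, hv => by
      have ih := capState_liftConf hN h0 t fun s hs => hv s (by omega)
      exact (tnTrans_concreteStep hN (ih ▸ hv t (by omega))).2

theorem tnTrans_liftConf (hN : ∀ ς, (T.guard ς).maxC ≤ N)
    {pc : ℕ → Fin n → Q × (C → Fin (N + 2))} {ps : ℕ → Sync k A (Fin n)}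
    (h0 : ∀ i, pc 0 i ∈ (T.regionTemplate N).I) (t : ℕ)
    (hv : ∀ s ≤ t, RBTrans (T.regionTemplate N) (pc s) (ps s) (pc (s + 1))) :
    TNTrans T (liftConf N pc ps t) (syncEquiv.symm (ps t)) (liftConf N pc ps (t + 1)) := by
  have hcap := capState_liftConf hN h0 t fun s hs => hv s hs.le
  exact (tnTrans_concreteStep hN (hcap ▸ hv t le_rfl)).1

end Simulation

section Paths

variable {T : TNTemplate k A Q C} {N : ℕ} {n : ℕ}

theorem capState_mem_regionTemplate_I {s : Q × (C → ℕ)} (hs : s.1 ∈ T.I ∧ ∀ x, s.2 x = 0) :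
    capState N s ∈ (T.regionTemplate N).I :=
  ⟨hs.1, funext fun x => by simp [capState, hs.2 x]⟩

def TNFinPath.capped (hN : ∀ ς, (T.guard ς).maxC ≤ N) (p : TNFinPath T n) :
    FinPath (T.regionTemplate N) (Fin n) :=
  ⟨p.len, fun t => capState N ∘ p.conf t, fun t => syncEquiv (p.sync t),
    fun t ht => rbTrans_capState hN (p.valid t ht)⟩

def TNInfPath.capped (hN : ∀ ς, (T.guard ς).maxC ≤ N) (p : TNInfPath T n) :
    InfPath (T.regionTemplate N) (Fin n) :=
  ⟨fun t => capState N ∘ p.conf t, fun t => syncEquiv (p.sync t),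
    fun t => rbTrans_capState hN (p.valid t)⟩

def FinPath.concrete (hN : ∀ ς, (T.guard ς).maxC ≤ N)
    (q : FinPath (T.regionTemplate N) (Fin n)) (hq : q.IsRun) : TNFinPath T n :=
  ⟨q.len, liftConf N q.conf q.sync, fun t => syncEquiv.symm (q.sync t),
    fun t ht => tnTrans_liftConf hN hq t fun s hs => q.valid s (by omega)⟩

def InfPath.concrete (hN : ∀ ς, (T.guard ς).maxC ≤ N)
    (q : InfPath (T.regionTemplate N) (Fin n)) (hq : q.IsRun) : TNInfPath T n :=
  ⟨liftConf N q.conf q.sync, fun t => syncEquiv.symm (q.sync t),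
    fun t => tnTrans_liftConf hN hq t fun s _ => q.valid s⟩

theorem map_proj_eq_proj {S : Type} {P : RBTemplate k A S} (h : S → Q) (p : TNFinPath T n)
    (q : FinPath P (Fin n)) (hlen : q.len = p.len)
    (hsync : ∀ t, q.sync t = syncEquiv (p.sync t))
    (hconf : ∀ t i, h (q.conf t i) = (p.conf t i).1) (i : Fin n) :
    (q.proj i).map (edgeToTLet h) = p.proj i := by
  rw [FinPath.proj, TNFinPath.proj, List.map_filterMap, hlen]
  refine List.filterMap_congr fun t _ => ?_
  rw [hsync]
  exact map_edgeAt_syncEquiv h (hconf t) (hconf (t + 1)) (p.sync t) i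

theorem exists_execFin_of_mem_execFinTN (hN : ∀ ς, (T.guard ς).maxC ≤ N)
    {w : List (Option (Q × (A × Fin k) × Q))} (hw : w ∈ execFinTN T) :
    ∃ l ∈ execFin (T.regionTemplate N), w = l.map (edgeToTLet Prod.fst) := by
  obtain ⟨n, p, hrun, rfl⟩ := hw
  refine ⟨_, ⟨n, p.capped hN, fun i => capState_mem_regionTemplate_I (hrun i), rfl⟩, ?_⟩
  exact (map_proj_eq_proj Prod.fst p _ rfl (fun _ => rfl) (fun _ _ => rfl) 0).symm

theorem map_mem_execFinTN_of_mem_execFin (hN : ∀ ς, (T.guard ς).maxC ≤ N)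
    {l : List (EdgeT k A (Q × (C → Fin (N + 2))))} (hl : l ∈ execFin (T.regionTemplate N)) :
    l.map (edgeToTLet Prod.fst) ∈ execFinTN T := by
  obtain ⟨n, q, hrun, rfl⟩ := hl
  refine ⟨n, q.concrete hN hrun, fun i => ⟨(hrun i).1, fun _ => rfl⟩, ?_⟩
  exact (map_proj_eq_proj Prod.fst (q.concrete hN hrun) q rfl
    (fun t => (Equiv.apply_symm_apply _ _).symm) (fun t i => (fst_liftConf _ _ t i).symm) 0).symm

theorem exists_execInf_of_mem_execInfTN (hN : ∀ ς, (T.guard ς).maxC ≤ N)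
    {w : ℕ → Option (Q × (A × Fin k) × Q)} (hw : w ∈ execInfTN T) :
    ∃ v ∈ execInf (T.regionTemplate N), w = fun t => edgeToTLet Prod.fst (v t) := by
  obtain ⟨n, p, hrun, ι, hι, hmoved, hedge⟩ := hw
  have hlift : ∀ m, ∃ e, edgeAt ((p.capped hN).conf (ι m)) ((p.capped hN).conf (ι m + 1))
      ((p.capped hN).sync (ι m)) 0 = some e ∧ edgeToTLet Prod.fst e = w m := fun m =>
    Option.map_eq_some_iff.mp ((map_edgeAt_capState _ _ _ 0).trans (hedge m))
  choose v hv hvw using hlift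
  refine ⟨v, ⟨n, p.capped hN, fun i => capState_mem_regionTemplate_I (hrun i), ι, hι,
    fun t => (moved_syncEquiv _ _).trans (hmoved t), hv⟩, funext fun m => (hvw m).symm⟩

theorem map_mem_execInfTN_of_mem_execInf (hN : ∀ ς, (T.guard ς).maxC ≤ N)
    {v : ℕ → EdgeT k A (Q × (C → Fin (N + 2)))} (hv : v ∈ execInf (T.regionTemplate N)) :
    (fun t => edgeToTLet Prod.fst (v t)) ∈ execInfTN T := by
  obtain ⟨n, q, hrun, ι, hι, hmoved, hedge⟩ := hv
  refine ⟨n, q.concrete hN hrun, fun i => ⟨(hrun i).1, fun _ => rfl⟩, ι, hι, fun t => ?_,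
    fun m => ?_⟩
  · show (syncEquiv.symm (q.sync t)).Moved 0 ↔ _
    rw [← moved_syncEquiv, Equiv.apply_symm_apply]
    exact hmoved t
  · show tEdgeAt (liftConf N q.conf q.sync (ι m)) (liftConf N q.conf q.sync (ι m + 1))
      (syncEquiv.symm (q.sync (ι m))) 0 = some (edgeToTLet Prod.fst (v m))
    rw [← map_edgeAt_syncEquiv Prod.fst (fun i => (fst_liftConf _ _ _ i).symm)
      (fun i => (fst_liftConf _ _ _ i).symm), Equiv.apply_symm_apply, hedge m]
    rfl

theorem exists_map_execFin_iff (hN : ∀ ς, (T.guard ς).maxC ≤ N)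
    (w : List (Option (Q × (A × Fin k) × Q))) :
    (∃ l ∈ execFin (T.regionTemplate N), w = l.map (edgeToTLet Prod.fst)) ↔
      w ∈ execFinTN T :=
  ⟨fun ⟨_, hl, hw⟩ => hw ▸ map_mem_execFinTN_of_mem_execFin hN hl,
    exists_execFin_of_mem_execFinTN hN⟩

theorem exists_map_execInf_iff (hN : ∀ ς, (T.guard ς).maxC ≤ N)
    (w : ℕ → Option (Q × (A × Fin k) × Q)) :
    (∃ v ∈ execInf (T.regionTemplate N), w = fun t => edgeToTLet Prod.fst (v t)) ↔
      w ∈ execInfTN T :=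
  ⟨fun ⟨_, hv, hw⟩ => hw ▸ map_mem_execInfTN_of_mem_execInf hN hv,
    exists_execInf_of_mem_execInfTN hN⟩

end Paths

theorem timed_network_to_RB_general
    {k : ℕ} {A Q C : Type} [Fintype A] [Fintype Q] [Fintype C]
    (T : TNTemplate k A Q C) :
    ∃ (SP : Type) (P : RBTemplate k A SP) (h : SP → Q),
      Finite SP ∧
      Nat.card SP ≤ Fintype.card Q *
        (Finset.univ.sup (fun ς : A × Fin k => (T.guard ς).maxC) + 2) ^ Fintype.card C ∧
      P.BTotal ∧
      (∀ w : List (Option (Q × (A × Fin k) × Q)),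
        (∃ l ∈ execFin P, w = l.map (edgeToTLet h)) ↔ w ∈ execFinTN T) ∧
      (∀ w : ℕ → Option (Q × (A × Fin k) × Q),
        (∃ v ∈ execInf P, w = fun t => edgeToTLet h (v t)) ↔ w ∈ execInfTN T) := by
  set N := Finset.univ.sup fun ς : A × Fin k => (T.guard ς).maxC
  have hN : ∀ ς, (T.guard ς).maxC ≤ N := fun ς =>
    Finset.le_sup (f := fun ς : A × Fin k => (T.guard ς).maxC) (Finset.mem_univ ς)
  refine ⟨_, T.regionTemplate N, Prod.fst, inferInstance, ?_, T.regionTemplate_bTotal N,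
    exists_map_execFin_iff hN, exists_map_execInf_iff hN⟩
  simp [Nat.card_fun, Nat.card_eq_fintype_card]

/-- For every discrete timed network template `T` there is a
finite RB-template `P` (with the same rendezvous alphabet, the broadcast modeling
the advance of time by one unit) with `exec(P) = exec(T)` under the correspondence
identifying broadcast edges with time steps and rendezvous edges of `P` with the
corresponding guarded edges of `T`; moreover `P` has at most
`|Q| · (c_max + 2)^|C|` states, where `c_max` is the greatest constant in the guards. -/
theorem timed_network_to_RB
    {k : ℕ} {A Q C : Type} [Fintype A] [Fintype Q] [Fintype C] (hk : 2 ≤ k)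
    (T : TNTemplate k A Q C) :
    ∃ (SP : Type) (P : RBTemplate k A SP) (h : SP → Q),
      Finite SP ∧
      Nat.card SP ≤ Fintype.card Q *
        (Finset.univ.sup (fun ς : A × Fin k => (T.guard ς).maxC) + 2) ^ Fintype.card C ∧
      P.BTotal ∧
      (∀ w : List (Option (Q × (A × Fin k) × Q)),
        (∃ l ∈ execFin P, w = l.map (edgeToTLet h)) ↔ w ∈ execFinTN T) ∧
      (∀ w : ℕ → Option (Q × (A × Fin k) × Q),
        (∃ v ∈ execInf P, w = fun t => edgeToTLet h (v t)) ↔ w ∈ execInfTN T) :=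
  timed_network_to_RB_general T
end
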